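/- There exists a constant C > 0, depending only on the uniform bound M of the feature function φ, such that for all B ≥ 2, all probability measures Q, P_1, …, P_B on Z, all D ∈ ℕ, and any measurable map Γ ↦ ω^Γ from (Γ₀)^D to S_B: E_Γ[ MMD²_κ( Σ_{k=1}^B ω_k^Γ P_k, Q ) ] ≤ E_Γ[ (1/D) Σ_{s=1}^D ( Σ_{k=1}^B ω_k^Γ E_{X∼P_k}[φ(γ_s,X)] − E_{Y∼Q}[φ(γ_s,Y)] )² ] + C·√( log B / D ), where Γ = (γ_1,…,γ_D) are i.i.d. ∼ p and MMD²_κ of the mixture is expanded bilinearly: MMD²_κ(Σ_k ω_k P_k, Q) = Σ_{k,ℓ} ω_k ω_ℓ ( E[κ(X_k,X_ℓ')] − E[κ(X_k,Y)] − E[κ(X_ℓ,Y)] + E[κ(Y,Y')] ) with X_k ∼ P_k, X_ℓ' ∼ P_ℓ, Y, Y' ∼ Q all independent. -/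

import Mathlib

open MeasureTheory
open scoped BigOperators

/-- The kernel induced by a random feature function: `κ(z,z') = E_{γ∼p}[φ(γ,z) φ(γ,z')]`. -/
noncomputable def rffKernel {Γ₀ Z : Type*} [MeasurableSpace Γ₀]
    (p : MeasureTheory.Measure Γ₀) (φ : Γ₀ → Z → ℝ) (z z' : Z) : ℝ :=
  ∫ γ, φ γ z * φ γ z' ∂p

universe u v


lemma integrable_of_bdd {α : Type*} [MeasurableSpace α] {μ : Measure α} [IsFiniteMeasure μ]
    {f : α → ℝ} (hm : AEStronglyMeasurable f μ) (C : ℝ) (h : ∀ x, |f x| ≤ C) :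
    Integrable f μ :=
  Integrable.mono' (integrable_const C) hm (Filter.Eventually.of_forall fun x => by
    simpa using h x)

lemma abs_integral_le_of_bdd {α : Type*} [MeasurableSpace α] {μ : Measure α}
    [IsProbabilityMeasure μ] {f : α → ℝ} (C : ℝ) (h : ∀ x, |f x| ≤ C) :
    |∫ x, f x ∂μ| ≤ C := by
  have := norm_integral_le_of_norm_le_const (μ := μ) (f := f) (C := C)
    (Filter.Eventually.of_forall fun x => by simpa using h x)
  simpa using this

/-- Hoeffding's lemma for symmetric bounds. -/
lemma hoeffding_lem {α : Type*} [MeasurableSpace α] (p : Measure α) [IsProbabilityMeasure p]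
    (u : α → ℝ) (hum : Measurable u) (σ : ℝ) (hσ : 0 < σ) (hub : ∀ x, |u x| ≤ σ)
    (hmean : ∫ x, u x ∂p = 0) (s : ℝ) :
    ∫ x, Real.exp (s * u x) ∂p ≤ Real.exp (s ^ 2 * σ ^ 2 / 2) := by
  have hσ0 : σ ≠ 0 := hσ.ne'
  have hui : Integrable u p := integrable_of_bdd hum.aestronglyMeasurable σ hub
  have hpt : ∀ x, Real.exp (s * u x)
      ≤ Real.cosh (s * σ) + (Real.sinh (s * σ) / σ) * u x := by
    intro x
    have h1 := abs_le.mp (hub x)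
    have ha : (0:ℝ) ≤ (σ - u x) / (2 * σ) := by
      apply div_nonneg <;> linarith
    have hb : (0:ℝ) ≤ (σ + u x) / (2 * σ) := by
      apply div_nonneg <;> linarith
    have hab : (σ - u x) / (2 * σ) + (σ + u x) / (2 * σ) = 1 := by
      field_simp; ring
    have hcvx := convexOn_exp.2 (Set.mem_univ (-(s*σ))) (Set.mem_univ (s*σ))
      ha hb hab
    simp only [smul_eq_mul] at hcvx
    have harg : (σ - u x) / (2 * σ) * -(s * σ) + (σ + u x) / (2 * σ) * (s * σ) = s * u x := by
      field_simp; ring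
    rw [harg] at hcvx
    refine hcvx.trans_eq ?_
    rw [Real.cosh_eq, Real.sinh_eq]
    field_simp
    ring
  have hint1 : Integrable (fun x => Real.exp (s * u x)) p := by
    refine integrable_of_bdd ?_ (Real.exp (|s| * σ)) ?_
    · exact ((Real.measurable_exp.comp (hum.const_mul s))).aestronglyMeasurable
    · intro x
      rw [abs_of_pos (Real.exp_pos _)]
      refine Real.exp_le_exp.mpr ?_
      calc s * u x ≤ |s * u x| := le_abs_self _
        _ = |s| * |u x| := abs_mul _ _
        _ ≤ |s| * σ := mul_le_mul_of_nonneg_left (hub x) (abs_nonneg s)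
  have hint2 : Integrable (fun x => Real.cosh (s * σ) + (Real.sinh (s * σ) / σ) * u x) p :=
    (integrable_const _).add (hui.const_mul _)
  calc ∫ x, Real.exp (s * u x) ∂p
      ≤ ∫ x, (Real.cosh (s * σ) + (Real.sinh (s * σ) / σ) * u x) ∂p :=
        integral_mono hint1 hint2 hpt
    _ = Real.cosh (s * σ) := by
        rw [integral_add (integrable_const _) (hui.const_mul _), integral_const_mul, hmean]
        simp
    _ ≤ Real.exp ((s * σ) ^ 2 / 2) := Real.cosh_le_exp_half_sq _
    _ = Real.exp (s ^ 2 * σ ^ 2 / 2) := by ring_nf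

/-- MGF bound for the empirical average over an i.i.d. pi measure. -/
lemma mgf_avg {α : Type*} [MeasurableSpace α] (p : Measure α) [IsProbabilityMeasure p]
    (u : α → ℝ) (hum : Measurable u) (σ : ℝ) (hσ : 0 < σ) (hub : ∀ x, |u x| ≤ σ)
    (hmean : ∫ x, u x ∂p = 0) (D : ℕ) (hD : 0 < D) (t : ℝ) :
    ∫ Γ : Fin D → α, Real.exp (t * ((D:ℝ)⁻¹ * ∑ s : Fin D, u (Γ s)))
        ∂(Measure.pi fun _ : Fin D => p)
      ≤ Real.exp (t ^ 2 * σ ^ 2 / (2 * D)) := by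
  letI : MeasureSpace α := ⟨p⟩
  haveI : SigmaFinite (volume : Measure α) := inferInstance
  have hDne : (D:ℝ) ≠ 0 := Nat.cast_ne_zero.mpr hD.ne'
  have key : ∀ Γ : Fin D → α,
      Real.exp (t * ((D:ℝ)⁻¹ * ∑ s : Fin D, u (Γ s)))
        = ∏ s : Fin D, Real.exp ((t / D) * u (Γ s)) := by
    intro Γ
    rw [← Real.exp_sum]
    congr 1
    rw [Finset.mul_sum, Finset.mul_sum]
    exact Finset.sum_congr rfl fun s _ => by field_simp
  simp_rw [key]
  have hpieq : (Measure.pi fun _ : Fin D => p) = (volume : Measure (Fin D → α)) := rfl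
  rw [hpieq]
  rw [← hpieq, MeasureTheory.integral_fintype_prod_eq_pow (ι := Fin D) (fun x => Real.exp ((t / D) * u x))]
  have h1 : ∫ x : α, Real.exp ((t / D) * u x) ≤ Real.exp ((t / D) ^ 2 * σ ^ 2 / 2) :=
    hoeffding_lem p u hum σ hσ hub hmean (t / D)
  have h0 : 0 ≤ ∫ x : α, Real.exp ((t / D) * u x) :=
    integral_nonneg fun x => (Real.exp_pos _).le
  calc (∫ x : α, Real.exp ((t / D) * u x)) ^ Fintype.card (Fin D)
      ≤ (Real.exp ((t / D) ^ 2 * σ ^ 2 / 2)) ^ Fintype.card (Fin D) :=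
        pow_le_pow_left₀ h0 h1 _
    _ = Real.exp (t ^ 2 * σ ^ 2 / (2 * D)) := by
        rw [Fintype.card_fin, ← Real.exp_nat_mul]
        congr 1
        field_simp

lemma weighted_le {B : ℕ} {w : Fin B → ℝ} (hw : w ∈ stdSimplex ℝ (Fin B))
    (v : Fin B → Fin B → ℝ) (E : ℝ) (hv : ∀ k l, v k l ≤ E) :
    ∑ k, ∑ l, w k * w l * v k l ≤ E := by
  have hsum : ∑ x, w x = 1 := hw.2
  calc ∑ k, ∑ l, w k * w l * v k l
      ≤ ∑ k, ∑ l, w k * w l * E :=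
        Finset.sum_le_sum fun k _ => Finset.sum_le_sum fun l _ =>
          mul_le_mul_of_nonneg_left (hv k l) (mul_nonneg (hw.1 k) (hw.1 l))
    _ = ∑ k, w k * E := by
        refine Finset.sum_congr rfl fun k _ => ?_
        rw [← Finset.sum_mul, ← Finset.mul_sum, hsum, mul_one]
    _ = E := by rw [← Finset.sum_mul, hsum, one_mul]

lemma weighted_abs_le {B : ℕ} {w : Fin B → ℝ} (hw : w ∈ stdSimplex ℝ (Fin B))
    (v : Fin B → Fin B → ℝ) (C : ℝ) (hv : ∀ k l, |v k l| ≤ C) :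
    |∑ k, ∑ l, w k * w l * v k l| ≤ C := by
  rw [abs_le]
  constructor
  · have := weighted_le hw (fun k l => -(v k l)) C
      (fun k l => by show -(v k l) ≤ C; have := abs_le.mp (hv k l); linarith)
    have heq : ∑ k, ∑ l, w k * w l * -(v k l) = -∑ k, ∑ l, w k * w l * v k l := by
      simp [mul_neg, Finset.sum_neg_distrib]
    rw [heq] at this
    linarith
  · exact weighted_le hw v C fun k l => (abs_le.mp (hv k l)).2

lemma exp_add_exp_neg_ge_two (y : ℝ) : 2 ≤ Real.exp y + Real.exp (-y) := by
  have h1 : Real.exp (y/2) * Real.exp (-(y/2)) = 1 := by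
    rw [← Real.exp_add]; simp
  have h2 : Real.exp (y/2) * Real.exp (y/2) = Real.exp y := by
    rw [← Real.exp_add]; ring_nf
  have h3 : Real.exp (-(y/2)) * Real.exp (-(y/2)) = Real.exp (-y) := by
    rw [← Real.exp_add]; ring_nf
  nlinarith [sq_nonneg (Real.exp (y/2) - Real.exp (-(y/2)))]

lemma rff_double {Γ₀ : Type u} {Z : Type v} [MeasurableSpace Γ₀] [MeasurableSpace Z]
    (p : Measure Γ₀) [IsProbabilityMeasure p] (φ : Γ₀ → Z → ℝ)
    (hφm : Measurable (Function.uncurry φ)) (M : ℝ) (hφb : ∀ γ z, |φ γ z| ≤ M)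
    (μ ν : Measure Z) [IsProbabilityMeasure μ] [IsProbabilityMeasure ν] :
    ∫ x, ∫ x', rffKernel p φ x x' ∂ν ∂μ
      = ∫ γ, (∫ x, φ γ x ∂μ) * (∫ x', φ γ x' ∂ν) ∂p := by
  haveI : Nonempty Z := Measure.nonempty_of_neZero μ
  haveI : Nonempty Γ₀ := Measure.nonempty_of_neZero p
  have hM0 : 0 ≤ M :=
    (abs_nonneg _).trans (hφb Classical.ofNonempty Classical.ofNonempty)
  have hbmeas : Measurable fun γ => ∫ x', φ γ x' ∂ν :=
    (hφm.stronglyMeasurable.integral_prod_right').measurable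
  have hbbd : ∀ γ, |∫ x', φ γ x' ∂ν| ≤ M := fun γ =>
    abs_integral_le_of_bdd M (fun x => hφb γ x)
  have hprodbd : ∀ (γ : Γ₀) (z z' : Z), |φ γ z * φ γ z'| ≤ M * M := by
    intro γ z z'
    rw [abs_mul]
    exact mul_le_mul (hφb γ z) (hφb γ z') (abs_nonneg _) hM0
  have inner : ∀ x : Z, ∫ x', rffKernel p φ x x' ∂ν
      = ∫ γ, φ γ x * (∫ x', φ γ x' ∂ν) ∂p := by
    intro x
    have hmeas : Measurable (Function.uncurry fun (x' : Z) (γ : Γ₀) => φ γ x * φ γ x') := by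
      have h1 : Measurable fun q : Z × Γ₀ => φ q.2 x :=
        hφm.comp (measurable_snd.prodMk measurable_const)
      have h2 : Measurable fun q : Z × Γ₀ => φ q.2 q.1 := hφm.comp measurable_swap
      exact h1.mul h2
    have hint : Integrable (Function.uncurry fun (x' : Z) (γ : Γ₀) => φ γ x * φ γ x')
        (ν.prod p) :=
      integrable_of_bdd hmeas.aestronglyMeasurable (M * M)
        (fun q => hprodbd q.2 x q.1)
    calc ∫ x', rffKernel p φ x x' ∂ν
        = ∫ x', ∫ γ, φ γ x * φ γ x' ∂p ∂ν := rfl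
      _ = ∫ γ, ∫ x', φ γ x * φ γ x' ∂ν ∂p := integral_integral_swap hint
      _ = ∫ γ, φ γ x * ∫ x', φ γ x' ∂ν ∂p := by
          refine integral_congr_ae (Filter.Eventually.of_forall fun γ => ?_)
          exact integral_const_mul _ _
  have hmeas2 : Measurable (Function.uncurry
      fun (x : Z) (γ : Γ₀) => φ γ x * (∫ x', φ γ x' ∂ν)) := by
    have h1 : Measurable fun q : Z × Γ₀ => φ q.2 q.1 := hφm.comp measurable_swap
    exact h1.mul (hbmeas.comp measurable_snd)
  have hint2 : Integrable (Function.uncurry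
      fun (x : Z) (γ : Γ₀) => φ γ x * (∫ x', φ γ x' ∂ν)) (μ.prod p) := by
    refine integrable_of_bdd hmeas2.aestronglyMeasurable (M * M) fun q => ?_
    show |φ q.2 q.1 * ∫ x', φ q.2 x' ∂ν| ≤ M * M
    rw [abs_mul]
    exact mul_le_mul (hφb q.2 q.1) (hbbd q.2) (abs_nonneg _) hM0
  calc ∫ x, ∫ x', rffKernel p φ x x' ∂ν ∂μ
      = ∫ x, ∫ γ, φ γ x * (∫ x', φ γ x' ∂ν) ∂p ∂μ := by
        refine integral_congr_ae (Filter.Eventually.of_forall fun x => ?_)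
        exact inner x
    _ = ∫ γ, ∫ x, φ γ x * (∫ x', φ γ x' ∂ν) ∂μ ∂p := integral_integral_swap hint2
    _ = ∫ γ, (∫ x, φ γ x ∂μ) * (∫ x', φ γ x' ∂ν) ∂p := by
        refine integral_congr_ae (Filter.Eventually.of_forall fun γ => ?_)
        exact integral_mul_const _ _

set_option maxHeartbeats 1000000 in
lemma master {α : Type*} [MeasurableSpace α] (p : Measure α) [IsProbabilityMeasure p]
    (B : ℕ) (hB : 2 ≤ B) (g : Fin B → α → ℝ) (hgm : ∀ k, Measurable (g k))
    (M2 : ℝ) (hM2 : 0 < M2) (hgb : ∀ k γ, |g k γ| ≤ M2)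
    (D : ℕ) (hD : 0 < D) (ω : (Fin D → α) → Fin B → ℝ) (hωm : Measurable ω)
    (hωs : ∀ Γ, ω Γ ∈ stdSimplex ℝ (Fin B)) :
    ∫ Γ, (∑ k, ∑ l, ω Γ k * ω Γ l *
        ((∫ γ, g k γ * g l γ ∂p) - (D:ℝ)⁻¹ * ∑ s : Fin D, g k (Γ s) * g l (Γ s)))
      ∂(Measure.pi fun _ : Fin D => p)
    ≤ (5 * M2 ^ 2) * Real.sqrt (Real.log B / D) := by
  have hDpos : (0:ℝ) < D := Nat.cast_pos.mpr hD
  have hDne : (D:ℝ) ≠ 0 := ne_of_gt hDpos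
  have hB1 : (2:ℝ) ≤ (B:ℝ) := by exact_mod_cast hB
  haveI : NeZero B := ⟨by omega⟩
  set PP : Measure (Fin D → α) := Measure.pi fun _ : Fin D => p with hPPdef
  haveI : IsProbabilityMeasure PP := by rw [hPPdef]; infer_instance
  -- basic objects
  set σ : ℝ := 2 * M2 ^ 2 with hσdef
  have hσ : 0 < σ := by positivity
  clear_value σ
  set m : Fin B → Fin B → ℝ := fun k l => ∫ γ, g k γ * g l γ ∂p with hmdef
  have hhm : ∀ k l : Fin B, Measurable (fun γ => g k γ * g l γ) :=
    fun k l => (hgm k).mul (hgm l)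
  have hhb : ∀ (k l : Fin B) γ, |g k γ * g l γ| ≤ M2 ^ 2 := by
    intro k l γ
    rw [abs_mul]
    calc |g k γ| * |g l γ| ≤ M2 * M2 :=
          mul_le_mul (hgb k γ) (hgb l γ) (abs_nonneg _) hM2.le
      _ = M2 ^ 2 := by ring
  have hhi : ∀ k l : Fin B, Integrable (fun γ => g k γ * g l γ) p :=
    fun k l => integrable_of_bdd (hhm k l).aestronglyMeasurable _ (hhb k l)
  have hmb : ∀ k l : Fin B, |m k l| ≤ M2 ^ 2 := fun k l =>
    abs_integral_le_of_bdd _ (hhb k l)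
  -- centered variables
  set u : Fin B → Fin B → α → ℝ := fun k l γ => m k l - g k γ * g l γ with hudef
  have hum : ∀ k l, Measurable (u k l) := fun k l => measurable_const.sub (hhm k l)
  have hub : ∀ k l γ, |u k l γ| ≤ σ := by
    intro k l γ
    calc |u k l γ| ≤ |m k l| + |g k γ * g l γ| := abs_sub _ _
      _ ≤ M2 ^ 2 + M2 ^ 2 := add_le_add (hmb k l) (hhb k l γ)
      _ = σ := by rw [hσdef]; ring
  have humean : ∀ k l, ∫ γ, u k l γ ∂p = 0 := by
    intro k l
    rw [hudef]
    simp only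
    rw [integral_sub (integrable_const _) (hhi k l), integral_const]
    simp [hmdef]
  -- the centered empirical average
  set c : Fin B → Fin B → (Fin D → α) → ℝ :=
    fun k l Γ => (D:ℝ)⁻¹ * ∑ s : Fin D, u k l (Γ s) with hcdef
  have hcm : ∀ k l, Measurable (c k l) := by
    intro k l
    exact ((Finset.measurable_sum Finset.univ
      (fun s _ => (hum k l).comp (measurable_pi_apply s))).const_mul _)
  have hcb : ∀ k l Γ, |c k l Γ| ≤ σ := by
    intro k l Γ
    rw [hcdef]
    simp only
    rw [abs_mul, abs_inv, Nat.abs_cast]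
    calc (D:ℝ)⁻¹ * |∑ s : Fin D, u k l (Γ s)|
        ≤ (D:ℝ)⁻¹ * ∑ s : Fin D, |u k l (Γ s)| := by
          exact mul_le_mul_of_nonneg_left (Finset.abs_sum_le_sum_abs _ _) (by positivity)
      _ ≤ (D:ℝ)⁻¹ * ∑ _s : Fin D, σ := by
          refine mul_le_mul_of_nonneg_left (Finset.sum_le_sum fun s _ => hub k l _) (by positivity)
      _ = σ := by
          rw [Finset.sum_const, Finset.card_univ, Fintype.card_fin, nsmul_eq_mul]
          field_simp
  have hqc : ∀ (k l : Fin B) (Γ : Fin D → α),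
      m k l - (D:ℝ)⁻¹ * ∑ s : Fin D, g k (Γ s) * g l (Γ s) = c k l Γ := by
    intro k l Γ
    rw [hcdef]
    simp only [hudef]
    rw [Finset.sum_sub_distrib, Finset.sum_const, Finset.card_univ, Fintype.card_fin,
      nsmul_eq_mul, mul_sub]
    congr 1
    field_simp
  clear_value c
  clear_value u m
  -- parameters
  set L : ℝ := Real.log (2 * (B:ℝ) ^ 2) with hLdef
  have hL : 0 < L := Real.log_pos (by nlinarith)
  have h2DL : 0 < 2 * (D:ℝ) * L := by positivity
  set s0 : ℝ := Real.sqrt (2 * D * L) with hs0def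
  have hs0 : 0 < s0 := Real.sqrt_pos.mpr h2DL
  have hs0sq : s0 ^ 2 = 2 * D * L := Real.sq_sqrt h2DL.le
  set t : ℝ := s0 / σ with htdef
  have ht : 0 < t := div_pos hs0 hσ
  clear_value L s0 t
  -- the log-sum-exp majorant
  set X : (Fin D → α) → ℝ :=
    fun Γ => ∑ k, ∑ l, (Real.exp (t * c k l Γ) + Real.exp (-(t * c k l Γ))) with hXdef
  have hXm : Measurable X := by
    refine Finset.measurable_sum Finset.univ fun k _ => ?_
    refine Finset.measurable_sum Finset.univ fun l _ => ?_
    exact (Real.measurable_exp.comp ((hcm k l).const_mul t)).add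
      (Real.measurable_exp.comp (((hcm k l).const_mul t).neg))
  have hXpos : ∀ Γ, 0 < X Γ := by
    intro Γ
    simp only [hXdef]
    refine Finset.sum_pos (fun k _ => Finset.sum_pos (fun l _ => by positivity) ?_) ?_
    · exact Finset.univ_nonempty
    · exact Finset.univ_nonempty
  have hX2 : ∀ Γ, 2 ≤ X Γ := by
    intro Γ
    have hk0 : (0 : Fin B) ∈ Finset.univ := Finset.mem_univ _
    calc (2:ℝ) ≤ Real.exp (t * c 0 0 Γ) + Real.exp (-(t * c 0 0 Γ)) :=
          exp_add_exp_neg_ge_two _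
      _ ≤ ∑ l, (Real.exp (t * c 0 l Γ) + Real.exp (-(t * c 0 l Γ))) :=
          Finset.single_le_sum
            (f := fun l => Real.exp (t * c 0 l Γ) + Real.exp (-(t * c 0 l Γ)))
            (fun l _ => by positivity) hk0
      _ ≤ X Γ := by
          simp only [hXdef]
          exact Finset.single_le_sum
            (f := fun k => ∑ l, (Real.exp (t * c k l Γ) + Real.exp (-(t * c k l Γ))))
            (fun k _ => Finset.sum_nonneg fun l _ => by positivity) hk0
  have hXub : ∀ Γ, X Γ ≤ 2 * B ^ 2 * Real.exp (t * σ) := by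
    intro Γ
    have hterm : ∀ (k l : Fin B) (y : ℝ), y = t * c k l Γ ∨ y = -(t * c k l Γ) →
        Real.exp y ≤ Real.exp (t * σ) := by
      intro k l y hy
      refine Real.exp_le_exp.mpr ?_
      have := abs_le.mp (hcb k l Γ)
      rcases hy with h | h <;> rw [h] <;> nlinarith
    calc X Γ ≤ ∑ _k : Fin B, ∑ _l : Fin B, (2 * Real.exp (t * σ)) := by
          simp only [hXdef]
          refine Finset.sum_le_sum fun k _ => Finset.sum_le_sum fun l _ => ?_
          have h1 := hterm k l _ (Or.inl rfl)
          have h2 := hterm k l _ (Or.inr rfl)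
          linarith
      _ = 2 * B ^ 2 * Real.exp (t * σ) := by
          rw [Finset.sum_const, Finset.sum_const, Finset.card_univ, Fintype.card_fin,
            nsmul_eq_mul, nsmul_eq_mul]
          ring
  have hXint : Integrable X PP := by
    refine integrable_of_bdd hXm.aestronglyMeasurable (2 * B ^ 2 * Real.exp (t * σ)) ?_
    intro Γ
    rw [abs_of_pos (hXpos Γ)]
    exact hXub Γ
  clear_value X
  -- pointwise bound
  have hptw : ∀ Γ, (∑ k, ∑ l, ω Γ k * ω Γ l * c k l Γ) ≤ t⁻¹ * Real.log (X Γ) := by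
    intro Γ
    refine weighted_le (hωs Γ) _ _ fun k l => ?_
    have habs : c k l Γ ≤ |c k l Γ| := le_abs_self _
    have hexp : Real.exp (t * |c k l Γ|) ≤ X Γ := by
      have hmem : Real.exp (t * c k l Γ) + Real.exp (-(t * c k l Γ)) ≤ X Γ := by
        calc Real.exp (t * c k l Γ) + Real.exp (-(t * c k l Γ))
            ≤ ∑ l', (Real.exp (t * c k l' Γ) + Real.exp (-(t * c k l' Γ))) :=
              Finset.single_le_sum
                (f := fun l' => Real.exp (t * c k l' Γ) + Real.exp (-(t * c k l' Γ)))
                (fun l' _ => by positivity) (Finset.mem_univ l)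
          _ ≤ X Γ := by
              simp only [hXdef]
              exact Finset.single_le_sum
                (f := fun k' => ∑ l', (Real.exp (t * c k' l' Γ) + Real.exp (-(t * c k' l' Γ))))
                (fun k' _ => Finset.sum_nonneg fun l' _ => by positivity) (Finset.mem_univ k)
      rcases abs_cases (c k l Γ) with ⟨h, _⟩ | ⟨h, _⟩
      · rw [h]
        have := Real.exp_pos (-(t * c k l Γ))
        linarith
      · rw [h, show t * -c k l Γ = -(t * c k l Γ) by ring]
        have := Real.exp_pos (t * c k l Γ)
        linarith
    have hlog : t * |c k l Γ| ≤ Real.log (X Γ) :=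
      (Real.le_log_iff_exp_le (hXpos Γ)).mpr hexp
    calc c k l Γ ≤ |c k l Γ| := habs
      _ = t⁻¹ * (t * |c k l Γ|) := by field_simp
      _ ≤ t⁻¹ * Real.log (X Γ) := by
          exact mul_le_mul_of_nonneg_left hlog (by positivity)
  -- integrability of both sides
  have hGm : Measurable (fun Γ => ∑ k, ∑ l, ω Γ k * ω Γ l * c k l Γ) := by
    refine Finset.measurable_sum Finset.univ fun k _ => ?_
    refine Finset.measurable_sum Finset.univ fun l _ => ?_
    exact (((measurable_pi_apply k).comp hωm).mul
      ((measurable_pi_apply l).comp hωm)).mul (hcm k l)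
  have hGint : Integrable (fun Γ => ∑ k, ∑ l, ω Γ k * ω Γ l * c k l Γ) PP := by
    refine integrable_of_bdd hGm.aestronglyMeasurable σ fun Γ => ?_
    exact weighted_abs_le (hωs Γ) _ _ fun k l => hcb k l Γ
  have hlogb : ∀ Γ, |Real.log (X Γ)| ≤ Real.log (2 * B ^ 2 * Real.exp (t * σ)) := by
    intro Γ
    have h1 : 0 ≤ Real.log (X Γ) := by
      have := Real.log_le_log (by norm_num : (0:ℝ) < 1) (by linarith [hX2 Γ] : (1:ℝ) ≤ X Γ)
      simpa using this
    rw [abs_of_nonneg h1]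
    exact Real.log_le_log (hXpos Γ) (hXub Γ)
  have hlogint : Integrable (fun Γ => t⁻¹ * Real.log (X Γ)) PP := by
    refine integrable_of_bdd ((Real.measurable_log.comp hXm).const_mul _).aestronglyMeasurable
      (t⁻¹ * Real.log (2 * B ^ 2 * Real.exp (t * σ))) fun Γ => ?_
    rw [abs_mul, abs_of_pos (by positivity : (0:ℝ) < t⁻¹)]
    exact mul_le_mul_of_nonneg_left (hlogb Γ) (by positivity)
  have hlogXint : Integrable (fun Γ => Real.log (X Γ)) PP := by
    refine integrable_of_bdd (Real.measurable_log.comp hXm).aestronglyMeasurable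
      (Real.log (2 * B ^ 2 * Real.exp (t * σ))) hlogb
  -- Jensen for the log via tangent line
  set A : ℝ := ∫ Γ, X Γ ∂PP with hAdef
  have hA2 : 2 ≤ A := by
    have := integral_mono (μ := PP) (integrable_const 2) hXint hX2
    simpa using this
  have hApos : 0 < A := by linarith
  clear_value A
  have hjensen : ∫ Γ, Real.log (X Γ) ∂PP ≤ Real.log A := by
    have hpt2 : ∀ Γ, Real.log (X Γ) ≤ Real.log A + X Γ / A - 1 := by
      intro Γ
      have h := Real.log_le_sub_one_of_pos (div_pos (hXpos Γ) hApos)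
      rw [Real.log_div (hXpos Γ).ne' hApos.ne'] at h
      linarith
    have hint : Integrable (fun Γ => Real.log A + X Γ / A - 1) PP :=
      ((integrable_const _).add (hXint.div_const _)).sub (integrable_const _)
    calc ∫ Γ, Real.log (X Γ) ∂PP ≤ ∫ Γ, (Real.log A + X Γ / A - 1) ∂PP :=
          integral_mono hlogXint hint hpt2
      _ = Real.log A := by
          have h1 : Integrable (fun Γ => Real.log A + X Γ / A) PP :=
            (integrable_const _).add (hXint.div_const _)
          have e1 : ∫ Γ, (Real.log A + X Γ / A - 1) ∂PP
              = (∫ Γ, (Real.log A + X Γ / A) ∂PP) - ∫ _Γ, (1:ℝ) ∂PP :=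
            integral_sub h1 (integrable_const 1)
          have e2 : ∫ Γ, (Real.log A + X Γ / A) ∂PP
              = (∫ _Γ, Real.log A ∂PP) + ∫ Γ, X Γ / A ∂PP :=
            integral_add (integrable_const _) (hXint.div_const _)
          rw [e1, e2, integral_div]
          simp only [integral_const, measure_univ, ENNReal.toReal_one, probReal_univ, one_smul, smul_eq_mul]
          rw [← hAdef, div_self hApos.ne']
          ring
  -- MGF bound on A
  have hterm_int : ∀ (k l : Fin B) (t' : ℝ),
      Integrable (fun Γ => Real.exp (t' * c k l Γ)) PP := by
    intro k l t'
    refine integrable_of_bdd (Real.measurable_exp.comp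
      ((hcm k l).const_mul t')).aestronglyMeasurable (Real.exp (|t'| * σ)) fun Γ => ?_
    rw [abs_of_pos (Real.exp_pos _)]
    refine Real.exp_le_exp.mpr ?_
    calc t' * c k l Γ ≤ |t' * c k l Γ| := le_abs_self _
      _ = |t'| * |c k l Γ| := abs_mul _ _
      _ ≤ |t'| * σ := mul_le_mul_of_nonneg_left (hcb k l Γ) (abs_nonneg _)
  have hmgf : ∀ (k l : Fin B) (t' : ℝ),
      ∫ Γ, Real.exp (t' * c k l Γ) ∂PP ≤ Real.exp (t' ^ 2 * σ ^ 2 / (2 * D)) := by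
    intro k l t'
    have hmg := mgf_avg p (u k l) (hum k l) σ hσ (hub k l) (humean k l) D hD t'
    rw [hPPdef]
    calc ∫ Γ, Real.exp (t' * c k l Γ) ∂(Measure.pi fun _ : Fin D => p)
        = ∫ Γ, Real.exp (t' * ((D:ℝ)⁻¹ * ∑ s : Fin D, u k l (Γ s)))
            ∂(Measure.pi fun _ : Fin D => p) := by
          refine integral_congr_ae (Filter.Eventually.of_forall fun Γ => ?_)
          rw [hcdef]
      _ ≤ Real.exp (t' ^ 2 * σ ^ 2 / (2 * D)) := hmg
  have hneg : ∀ k l : Fin B,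
      (fun Γ => Real.exp ((-t) * c k l Γ)) = (fun Γ => Real.exp (-(t * c k l Γ))) := by
    intro k l; funext Γ; congr 1; ring
  have hnegint : ∀ k l : Fin B,
      Integrable (fun Γ => Real.exp (-(t * c k l Γ))) PP := by
    intro k l
    rw [← hneg k l]
    exact hterm_int k l (-t)
  have hpair_int : ∀ k l : Fin B,
      Integrable (fun Γ => Real.exp (t * c k l Γ) + Real.exp (-(t * c k l Γ))) PP :=
    fun k l => (hterm_int k l t).add (hnegint k l)
  have hsplit : A = ∑ k, ∑ l,
      ∫ Γ, (Real.exp (t * c k l Γ) + Real.exp (-(t * c k l Γ))) ∂PP := by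
    rw [hAdef]
    have hXeq : (fun Γ => X Γ) = fun Γ => ∑ k, ∑ l,
        (Real.exp (t * c k l Γ) + Real.exp (-(t * c k l Γ))) := by
      funext Γ; simp only [hXdef]
    rw [hXeq]
    rw [integral_finset_sum Finset.univ
      (fun k _ => integrable_finset_sum Finset.univ (fun l _ => hpair_int k l))]
    exact Finset.sum_congr rfl fun k _ =>
      integral_finset_sum Finset.univ (fun l _ => hpair_int k l)
  have hpair_le : ∀ k l : Fin B,
      ∫ Γ, (Real.exp (t * c k l Γ) + Real.exp (-(t * c k l Γ))) ∂PP
        ≤ 2 * Real.exp (t ^ 2 * σ ^ 2 / (2 * D)) := by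
    intro k l
    rw [integral_add (hterm_int k l t) (hnegint k l)]
    have h1 := hmgf k l t
    have h2 : ∫ Γ, Real.exp (-(t * c k l Γ)) ∂PP ≤ Real.exp (t ^ 2 * σ ^ 2 / (2 * D)) := by
      rw [← hneg k l]
      have h4 := hmgf k l (-t)
      have h5 : (-t : ℝ) ^ 2 = t ^ 2 := by ring
      rw [h5] at h4
      exact h4
    linarith
  have hAle : A ≤ 2 * B ^ 2 * Real.exp (t ^ 2 * σ ^ 2 / (2 * D)) := by
    rw [hsplit]
    calc ∑ k, ∑ l, ∫ Γ, (Real.exp (t * c k l Γ) + Real.exp (-(t * c k l Γ))) ∂PP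
        ≤ ∑ _k : Fin B, ∑ _l : Fin B, (2 * Real.exp (t ^ 2 * σ ^ 2 / (2 * D))) :=
          Finset.sum_le_sum fun k _ => Finset.sum_le_sum fun l _ => hpair_le k l
      _ = 2 * B ^ 2 * Real.exp (t ^ 2 * σ ^ 2 / (2 * D)) := by
          rw [Finset.sum_const, Finset.sum_const, Finset.card_univ, Fintype.card_fin,
            nsmul_eq_mul, nsmul_eq_mul]
          ring
  have hlogA : Real.log A ≤ L + t ^ 2 * σ ^ 2 / (2 * D) := by
    calc Real.log A ≤ Real.log (2 * B ^ 2 * Real.exp (t ^ 2 * σ ^ 2 / (2 * D))) :=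
          Real.log_le_log hApos hAle
      _ = L + t ^ 2 * σ ^ 2 / (2 * D) := by
          rw [Real.log_mul (by positivity) (Real.exp_ne_zero _), Real.log_exp, hLdef]
  -- final arithmetic
  have harith : t⁻¹ * (L + t ^ 2 * σ ^ 2 / (2 * D)) = σ * s0 / D := by
    have hL' : L = s0 ^ 2 / (2 * D) := by rw [hs0sq]; field_simp
    rw [htdef, hL']
    field_simp
    ring
  have hfinal : σ * s0 / D ≤ 5 * M2 ^ 2 * Real.sqrt (Real.log B / D) := by
    have hlogB : 0 < Real.log B := Real.log_pos (by exact_mod_cast lt_of_lt_of_le one_lt_two hB1)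
    have hLle : L ≤ 3 * Real.log B := by
      rw [hLdef, Real.log_mul (by norm_num) (by positivity), Real.log_pow]
      have : Real.log 2 ≤ Real.log B := Real.log_le_log (by norm_num) hB1
      push_cast
      linarith
    have hsq : (σ * s0 / D) ^ 2 ≤ (5 * M2 ^ 2) ^ 2 * (Real.log B / D) := by
      have : (σ * s0 / D) ^ 2 = σ ^ 2 * (2 * D * L) / D ^ 2 := by
        rw [div_pow, mul_pow, hs0sq]
      rw [this, hσdef]
      rw [show (2 * M2 ^ 2) ^ 2 * (2 * (D:ℝ) * L) / D ^ 2 = (8 * M2 ^ 4) * (L / D) by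
        field_simp; ring]
      rw [show (5 * M2 ^ 2) ^ 2 * (Real.log B / D) = (25 * M2 ^ 4) * (Real.log B / D) by ring]
      have h1 : L / D ≤ 3 * Real.log B / D := by gcongr
      have hx : 0 ≤ Real.log B / D := (div_pos hlogB hDpos).le
      calc (8 * M2 ^ 4) * (L / D) ≤ (8 * M2 ^ 4) * (3 * Real.log B / D) :=
            mul_le_mul_of_nonneg_left h1 (by positivity)
        _ ≤ 25 * M2 ^ 4 * (Real.log B / D) := by
            rw [show (3 : ℝ) * Real.log B / D = 3 * (Real.log B / D) by ring]
            nlinarith [mul_nonneg (pow_pos hM2 4).le hx]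
    calc σ * s0 / D = Real.sqrt ((σ * s0 / D) ^ 2) := (Real.sqrt_sq (by positivity)).symm
      _ ≤ Real.sqrt ((5 * M2 ^ 2) ^ 2 * (Real.log B / D)) := Real.sqrt_le_sqrt hsq
      _ = 5 * M2 ^ 2 * Real.sqrt (Real.log B / D) := by
          rw [Real.sqrt_mul (by positivity), Real.sqrt_sq (by positivity)]
  -- assemble
  calc ∫ Γ, (∑ k, ∑ l, ω Γ k * ω Γ l *
        ((∫ γ, g k γ * g l γ ∂p) - (D:ℝ)⁻¹ * ∑ s : Fin D, g k (Γ s) * g l (Γ s))) ∂PP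
      = ∫ Γ, (∑ k, ∑ l, ω Γ k * ω Γ l * c k l Γ) ∂PP := by
        refine integral_congr_ae (Filter.Eventually.of_forall fun Γ => ?_)
        refine Finset.sum_congr rfl fun k _ => Finset.sum_congr rfl fun l _ => ?_
        have hmk : (∫ γ, g k γ * g l γ ∂p) = m k l := by rw [hmdef]
        rw [hmk, hqc k l Γ]
    _ ≤ ∫ Γ, t⁻¹ * Real.log (X Γ) ∂PP := integral_mono hGint hlogint hptw
    _ = t⁻¹ * ∫ Γ, Real.log (X Γ) ∂PP := integral_const_mul _ _
    _ ≤ t⁻¹ * Real.log A := mul_le_mul_of_nonneg_left hjensen (by positivity)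
    _ ≤ t⁻¹ * (L + t ^ 2 * σ ^ 2 / (2 * D)) :=
        mul_le_mul_of_nonneg_left hlogA (by positivity)
    _ = σ * s0 / D := harith
    _ ≤ 5 * M2 ^ 2 * Real.sqrt (Real.log B / D) := hfinal

set_option maxHeartbeats 1000000 in
/-- There is a constant `C > 0` depending only on the uniform bound `M`
of the feature function such that for any `Γ`-measurable simplex weights `ω^Γ`, the
expected squared MMD between the mixture `Σ_k ω_k^Γ P_k` (expanded bilinearly) and `Q` is
bounded by the expected `D`-dimensional random-feature estimate plus `C √(log B / D)`. -/
theorem stmt_11 (M : ℝ) (hM : 0 < M) :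
    ∃ C : ℝ, 0 < C ∧
      ∀ (Γ₀ : Type u) [MeasurableSpace Γ₀] (p : Measure Γ₀),
        IsProbabilityMeasure p →
      ∀ (Z : Type v) [MeasurableSpace Z] (φ : Γ₀ → Z → ℝ),
        Measurable (Function.uncurry φ) → (∀ γ z, |φ γ z| ≤ M) →
      ∀ B : ℕ, 2 ≤ B →
      ∀ (Q : Measure Z) (P : Fin B → Measure Z),
        IsProbabilityMeasure Q → (∀ k, IsProbabilityMeasure (P k)) →
      ∀ D : ℕ, 0 < D →
      ∀ ω : (Fin D → Γ₀) → Fin B → ℝ,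
        Measurable ω → (∀ Γ, ω Γ ∈ stdSimplex ℝ (Fin B)) →
        (∫ Γ, (∑ k, ∑ l, ω Γ k * ω Γ l *
            ((∫ x, ∫ x', rffKernel p φ x x' ∂(P l) ∂(P k))
              - (∫ x, ∫ y, rffKernel p φ x y ∂Q ∂(P k))
              - (∫ x, ∫ y, rffKernel p φ x y ∂Q ∂(P l))
              + ∫ y, ∫ y', rffKernel p φ y y' ∂Q ∂Q))
          ∂(Measure.pi fun _ : Fin D => p))
        ≤ (∫ Γ, (D : ℝ)⁻¹ * ∑ s : Fin D,
              ((∑ k, ω Γ k * ∫ x, φ (Γ s) x ∂(P k)) - ∫ y, φ (Γ s) y ∂Q) ^ 2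
            ∂(Measure.pi fun _ : Fin D => p))
          + C * Real.sqrt (Real.log B / D) := by
  refine ⟨20 * M ^ 2, by positivity, ?_⟩
  intro Γ₀ _ p hp Z _ φ hφm hφb B hB Q P hQ hP D hD ω hωm hωs
  haveI := hp
  haveI := hQ
  haveI : ∀ k, IsProbabilityMeasure (P k) := hP
  haveI : IsProbabilityMeasure (Measure.pi fun _ : Fin D => p) := inferInstance
  have hDpos : (0:ℝ) < D := Nat.cast_pos.mpr hD
  -- mean embeddings
  set g : Fin B → Γ₀ → ℝ := fun k γ => (∫ x, φ γ x ∂(P k)) - ∫ y, φ γ y ∂Q with hgdef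
  have hamel : ∀ k : Fin B, Measurable fun γ => ∫ x, φ γ x ∂(P k) := fun k =>
    (hφm.stronglyMeasurable.integral_prod_right').measurable
  have hbmel : Measurable fun γ => ∫ y, φ γ y ∂Q :=
    (hφm.stronglyMeasurable.integral_prod_right').measurable
  have hgm : ∀ k, Measurable (g k) := fun k => (hamel k).sub hbmel
  have hab : ∀ (k : Fin B) (γ : Γ₀), |∫ x, φ γ x ∂(P k)| ≤ M := fun k γ =>
    abs_integral_le_of_bdd M (fun x => hφb γ x)
  have hbb : ∀ γ : Γ₀, |∫ y, φ γ y ∂Q| ≤ M := fun γ =>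
    abs_integral_le_of_bdd M (fun x => hφb γ x)
  have hgb : ∀ (k : Fin B) (γ : Γ₀), |g k γ| ≤ 2 * M := by
    intro k γ
    rw [hgdef]
    calc |(∫ x, φ γ x ∂(P k)) - ∫ y, φ γ y ∂Q|
        ≤ |∫ x, φ γ x ∂(P k)| + |∫ y, φ γ y ∂Q| := abs_sub _ _
      _ ≤ M + M := add_le_add (hab k γ) (hbb γ)
      _ = 2 * M := by ring
  -- integrability of products of mean embeddings
  have hintp : ∀ (μ1 μ2 : Measure Z), IsProbabilityMeasure μ1 → IsProbabilityMeasure μ2 →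
      Integrable (fun γ => (∫ x, φ γ x ∂μ1) * (∫ x, φ γ x ∂μ2)) p := by
    intro μ1 μ2 h1 h2
    refine integrable_of_bdd (((hφm.stronglyMeasurable.integral_prod_right').measurable).mul
      ((hφm.stronglyMeasurable.integral_prod_right').measurable)).aestronglyMeasurable
      (M * M) fun γ => ?_
    rw [abs_mul]
    exact mul_le_mul (abs_integral_le_of_bdd M (fun x => hφb γ x))
      (abs_integral_le_of_bdd M (fun x => hφb γ x)) (abs_nonneg _) (hM.le)
  -- the bracket identity
  have hbr : ∀ k l : Fin B,
      (∫ x, ∫ x', rffKernel p φ x x' ∂(P l) ∂(P k))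
        - (∫ x, ∫ y, rffKernel p φ x y ∂Q ∂(P k))
        - (∫ x, ∫ y, rffKernel p φ x y ∂Q ∂(P l))
        + (∫ y, ∫ y', rffKernel p φ y y' ∂Q ∂Q)
      = ∫ γ, g k γ * g l γ ∂p := by
    intro k l
    rw [rff_double p φ hφm M hφb (P k) (P l), rff_double p φ hφm M hφb (P k) Q,
      rff_double p φ hφm M hφb (P l) Q, rff_double p φ hφm M hφb Q Q]
    have h1 := hintp (P k) (P l) (hP k) (hP l)
    have h2 := hintp (P k) Q (hP k) hQ
    have h3 := hintp (P l) Q (hP l) hQ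
    have h4 := hintp Q Q hQ hQ
    have hfun : (fun γ => g k γ * g l γ) = fun γ =>
        ((∫ x, φ γ x ∂(P k)) * (∫ x, φ γ x ∂(P l)) - (∫ x, φ γ x ∂(P k)) * (∫ x, φ γ x ∂Q))
        - ((∫ x, φ γ x ∂(P l)) * (∫ x, φ γ x ∂Q) - (∫ x, φ γ x ∂Q) * (∫ x, φ γ x ∂Q)) := by
      funext γ
      rw [hgdef]
      ring
    have e1 : ∫ γ, (((∫ x, φ γ x ∂(P k)) * (∫ x, φ γ x ∂(P l))
          - (∫ x, φ γ x ∂(P k)) * (∫ x, φ γ x ∂Q))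
        - ((∫ x, φ γ x ∂(P l)) * (∫ x, φ γ x ∂Q)
          - (∫ x, φ γ x ∂Q) * (∫ x, φ γ x ∂Q))) ∂p
        = (∫ γ, ((∫ x, φ γ x ∂(P k)) * (∫ x, φ γ x ∂(P l))
            - (∫ x, φ γ x ∂(P k)) * (∫ x, φ γ x ∂Q)) ∂p)
          - ∫ γ, ((∫ x, φ γ x ∂(P l)) * (∫ x, φ γ x ∂Q)
            - (∫ x, φ γ x ∂Q) * (∫ x, φ γ x ∂Q)) ∂p :=
      integral_sub (h1.sub h2) (h3.sub h4)
    have e2 : ∫ γ, ((∫ x, φ γ x ∂(P k)) * (∫ x, φ γ x ∂(P l))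
          - (∫ x, φ γ x ∂(P k)) * (∫ x, φ γ x ∂Q)) ∂p
        = (∫ γ, (∫ x, φ γ x ∂(P k)) * (∫ x, φ γ x ∂(P l)) ∂p)
          - ∫ γ, (∫ x, φ γ x ∂(P k)) * (∫ x, φ γ x ∂Q) ∂p :=
      integral_sub h1 h2
    have e3 : ∫ γ, ((∫ x, φ γ x ∂(P l)) * (∫ x, φ γ x ∂Q)
          - (∫ x, φ γ x ∂Q) * (∫ x, φ γ x ∂Q)) ∂p
        = (∫ γ, (∫ x, φ γ x ∂(P l)) * (∫ x, φ γ x ∂Q) ∂p)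
          - ∫ γ, (∫ x, φ γ x ∂Q) * (∫ x, φ γ x ∂Q) ∂p :=
      integral_sub h3 h4
    rw [hfun, e1, e2, e3]
    ring
  simp only [hbr]
  -- expand the square on the right
  have hsq : ∀ (Γ : Fin D → Γ₀) (γ : Γ₀),
      ((∑ k, ω Γ k * ∫ x, φ γ x ∂(P k)) - ∫ y, φ γ y ∂Q) ^ 2
        = ∑ k, ∑ l, ω Γ k * ω Γ l * (g k γ * g l γ) := by
    intro Γ γ
    have h1 : (∑ k, ω Γ k * ∫ x, φ γ x ∂(P k)) - ∫ y, φ γ y ∂Q = ∑ k, ω Γ k * g k γ := by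
      rw [hgdef]
      simp only [mul_sub]
      rw [Finset.sum_sub_distrib, ← Finset.sum_mul, (hωs Γ).2, one_mul]
    rw [h1, pow_two, Finset.sum_mul_sum]
    exact Finset.sum_congr rfl fun k _ => Finset.sum_congr rfl fun l _ => by ring
  simp only [hsq]
  -- integrability of both integrands
  have hhb : ∀ (k l : Fin B) (γ : Γ₀), |g k γ * g l γ| ≤ (2 * M) ^ 2 := by
    intro k l γ
    rw [abs_mul, pow_two]
    exact mul_le_mul (hgb k γ) (hgb l γ) (abs_nonneg _) (by positivity)
  have hmb : ∀ k l : Fin B, |∫ γ, g k γ * g l γ ∂p| ≤ (2 * M) ^ 2 := fun k l =>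
    abs_integral_le_of_bdd _ (hhb k l)
  have hFint : Integrable (fun Γ => ∑ k, ∑ l, ω Γ k * ω Γ l * ∫ γ, g k γ * g l γ ∂p)
      (Measure.pi fun _ : Fin D => p) := by
    refine integrable_of_bdd ?_ ((2 * M) ^ 2) ?_
    · refine (Finset.measurable_sum Finset.univ fun k _ =>
        Finset.measurable_sum Finset.univ fun l _ => ?_).aestronglyMeasurable
      exact (((measurable_pi_apply k).comp hωm).mul
        ((measurable_pi_apply l).comp hωm)).mul measurable_const
    · intro Γ
      exact weighted_abs_le (hωs Γ) _ _ fun k l => hmb k l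
  have hGint : Integrable (fun Γ => (D:ℝ)⁻¹ * ∑ s : Fin D, ∑ k, ∑ l,
      ω Γ k * ω Γ l * (g k (Γ s) * g l (Γ s))) (Measure.pi fun _ : Fin D => p) := by
    refine integrable_of_bdd ?_ ((2 * M) ^ 2) ?_
    · refine ((Finset.measurable_sum Finset.univ fun s _ =>
        Finset.measurable_sum Finset.univ fun k _ =>
        Finset.measurable_sum Finset.univ fun l _ => ?_).const_mul _).aestronglyMeasurable
      exact (((measurable_pi_apply k).comp hωm).mul
        ((measurable_pi_apply l).comp hωm)).mul
        (((hgm k).comp (measurable_pi_apply s)).mul ((hgm l).comp (measurable_pi_apply s)))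
    · intro Γ
      rw [abs_mul, abs_inv, Nat.abs_cast]
      calc (D:ℝ)⁻¹ * |∑ s : Fin D, ∑ k, ∑ l, ω Γ k * ω Γ l * (g k (Γ s) * g l (Γ s))|
          ≤ (D:ℝ)⁻¹ * ∑ s : Fin D, |∑ k, ∑ l, ω Γ k * ω Γ l * (g k (Γ s) * g l (Γ s))| :=
            mul_le_mul_of_nonneg_left (Finset.abs_sum_le_sum_abs _ _) (by positivity)
        _ ≤ (D:ℝ)⁻¹ * ∑ _s : Fin D, (2 * M) ^ 2 := by
            refine mul_le_mul_of_nonneg_left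
              (Finset.sum_le_sum fun s _ => weighted_abs_le (hωs Γ) _ _ fun k l => hhb k l _)
              (by positivity)
        _ = (2 * M) ^ 2 := by
            rw [Finset.sum_const, Finset.card_univ, Fintype.card_fin, nsmul_eq_mul]
            field_simp
  -- apply the master bound
  have hkey := master p B hB g hgm (2 * M) (by positivity) hgb D hD ω hωm hωs
  have hsub : (∫ Γ, (∑ k, ∑ l, ω Γ k * ω Γ l * ∫ γ, g k γ * g l γ ∂p)
        ∂(Measure.pi fun _ : Fin D => p))
      - (∫ Γ, (D:ℝ)⁻¹ * ∑ s : Fin D, ∑ k, ∑ l, ω Γ k * ω Γ l * (g k (Γ s) * g l (Γ s))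
        ∂(Measure.pi fun _ : Fin D => p))
      = ∫ Γ, (∑ k, ∑ l, ω Γ k * ω Γ l *
          ((∫ γ, g k γ * g l γ ∂p) - (D:ℝ)⁻¹ * ∑ s : Fin D, g k (Γ s) * g l (Γ s)))
        ∂(Measure.pi fun _ : Fin D => p) := by
    rw [← integral_sub hFint hGint]
    refine integral_congr_ae (Filter.Eventually.of_forall fun Γ => ?_)
    have h2 : (D:ℝ)⁻¹ * ∑ s : Fin D, ∑ k, ∑ l, ω Γ k * ω Γ l * (g k (Γ s) * g l (Γ s))
        = ∑ k, ∑ l, ω Γ k * ω Γ l * ((D:ℝ)⁻¹ * ∑ s : Fin D, g k (Γ s) * g l (Γ s)) := by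
      calc (D:ℝ)⁻¹ * ∑ s : Fin D, ∑ k, ∑ l, ω Γ k * ω Γ l * (g k (Γ s) * g l (Γ s))
          = ∑ s : Fin D, ∑ k, ∑ l, (D:ℝ)⁻¹ * (ω Γ k * ω Γ l * (g k (Γ s) * g l (Γ s))) := by
            rw [Finset.mul_sum]
            refine Finset.sum_congr rfl fun s _ => ?_
            rw [Finset.mul_sum]
            exact Finset.sum_congr rfl fun k _ => Finset.mul_sum _ _ _
        _ = ∑ k, ∑ s : Fin D, ∑ l, (D:ℝ)⁻¹ * (ω Γ k * ω Γ l * (g k (Γ s) * g l (Γ s))) :=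
            Finset.sum_comm
        _ = ∑ k, ∑ l, ∑ s : Fin D, (D:ℝ)⁻¹ * (ω Γ k * ω Γ l * (g k (Γ s) * g l (Γ s))) :=
            Finset.sum_congr rfl fun k _ => Finset.sum_comm
        _ = ∑ k, ∑ l, ω Γ k * ω Γ l * ((D:ℝ)⁻¹ * ∑ s : Fin D, g k (Γ s) * g l (Γ s)) := by
            refine Finset.sum_congr rfl fun k _ => Finset.sum_congr rfl fun l _ => ?_
            rw [Finset.mul_sum, Finset.mul_sum]
            exact Finset.sum_congr rfl fun s _ => by ring
    simp only [h2]
    rw [← Finset.sum_sub_distrib]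
    refine Finset.sum_congr rfl fun k _ => ?_
    rw [← Finset.sum_sub_distrib]
    refine Finset.sum_congr rfl fun l _ => ?_
    ring
  have h520 : 5 * (2 * M) ^ 2 = 20 * M ^ 2 := by ring
  rw [h520] at hkey
  linarith [hkey, hsub.ge, hsub.le]
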